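/- Let a, β : [0,∞) → ℝ be continuous with β continuously differentiable, let λ > 0, c ∈ ℝ, ξ ∈ ℝ, let g : [0,∞) → ℝ be continuous and set f(t) = ∫₀ᵗ g(s) ds. Suppose z : [0,∞) → ℝ is the mode resolvent, i.e. z is continuously differentiable, z(0) = 1, and for all t ≥ 0: z'(t) + β(0)z(t) + ∫₀ᵗ β'(t−s)z(s) ds = −λ² ∫₀ᵗ a(t−s)z(s) ds. Suppose θ : [0,∞) → ℝ is continuously differentiable with θ(0) = ξ and for all t ≥ 0: θ'(t) + β(0)θ(t) + ∫₀ᵗ β'(t−s)θ(s) ds = −λ² ∫₀ᵗ a(t−s)θ(s) ds + c ∫₀ᵗ a(t−s)f(s) ds. Then for all t ≥ 0: θ(t) = z(t)ξ + (c/λ²) ∫₀ᵗ g(s) ds − (c/λ²) ∫₀ᵗ g(t−s)·(z(s) + ∫₀ˢ β(s−r)z(r) dr) ds. -/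

import Mathlib

/-!
Integrating the two equations turns them into Volterra equations of the second kind
`x + k ⋆ x = x 0 + …` with the common kernel `k = β + λ² A`, `A = ∫₀ a`, where `⋆` is
the convolution on `[0, t]`. As this convolution is commutative and associative,
`P = A ⋆ z` solves `P + k ⋆ P = ∫₀ A` and `Q = g ⋆ P` solves `Q + k ⋆ Q = A ⋆ f`; hence
`θ - ξ z - c Q` solves the homogeneous equation and vanishes by Gronwall's inequality.
The formula follows by substituting `z + β ⋆ z = 1 - λ² P`. The data, given on `[0, ∞)`,
are first extended continuously to `ℝ` by `t ↦ f (max t 0)`.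
-/

open MeasureTheory Set Function

theorem integral_integral_triangle_swap {F : ℝ → ℝ → ℝ} (hF : Continuous (uncurry F))
    {t : ℝ} (ht : 0 ≤ t) :
    ∫ s in 0..t, ∫ r in 0..s, F s r = ∫ r in 0..t, ∫ s in r..t, F s r := by
  let G : ℝ × ℝ → ℝ := {p | p.2 ≤ p.1}.indicator (uncurry F)
  have hG : Integrable (uncurry fun s r => G (s, r))
      ((volume.restrict (Ioc 0 t)).prod (volume.restrict (Ioc 0 t))) := by
    rw [Measure.prod_restrict, ← Measure.volume_eq_prod]
    refine IntegrableOn.indicator ?_ (measurableSet_le measurable_snd measurable_fst)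
    exact (hF.continuousOn.integrableOn_compact (isCompact_Icc.prod isCompact_Icc)).mono_set
      (prod_mono Ioc_subset_Icc_self Ioc_subset_Icc_self)
  have inner_left : EqOn (fun s => ∫ r in 0..s, F s r) (fun s => ∫ r in Ioc 0 t, G (s, r))
      (Ioc 0 t) := by
    intro s hs
    have hGs : (fun r => G (s, r)) = (Iic s).indicator (F s) := by
      ext r; simp [G, indicator]
    simp only [hGs, setIntegral_indicator measurableSet_Iic, Ioc_inter_Iic,
      min_eq_right hs.2, intervalIntegral.integral_of_le hs.1.le]
  have inner_right : EqOn (fun r => ∫ s in Ioc 0 t, G (s, r)) (fun r => ∫ s in r..t, F s r)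
      (Ioc 0 t) := by
    intro r hr
    have hGr : (fun s => G (s, r)) = (Ici r).indicator (fun s => F s r) := by
      ext s; simp [G, indicator]
    have hset : Ioc 0 t ∩ Ici r = Icc r t := by
      ext s; simp only [mem_inter_iff, mem_Ioc, mem_Ici, mem_Icc]
      constructor
      · rintro ⟨⟨-, hst⟩, hrs⟩; exact ⟨hrs, hst⟩
      · rintro ⟨hrs, hst⟩; exact ⟨⟨hr.1.trans_le hrs, hst⟩, hrs⟩
    simp only [hGr, setIntegral_indicator measurableSet_Ici, hset, integral_Icc_eq_integral_Ioc,
      intervalIntegral.integral_of_le hr.2]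
  rw [intervalIntegral.integral_of_le ht, intervalIntegral.integral_of_le ht,
    setIntegral_congr_fun measurableSet_Ioc inner_left,
    ← setIntegral_congr_fun measurableSet_Ioc inner_right]
  exact integral_integral_swap hG

noncomputable def laplaceConv (x y : ℝ → ℝ) (t : ℝ) : ℝ := ∫ s in 0..t, x (t - s) * y s

noncomputable def volterra (k x : ℝ → ℝ) : ℝ → ℝ := x + laplaceConv k x

section LaplaceConv

variable {x x' y y' w : ℝ → ℝ} {t : ℝ}

theorem continuous_laplaceConv (hx : Continuous x) (hy : Continuous y) :
    Continuous (laplaceConv x y) :=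
  intervalIntegral.continuous_parametric_intervalIntegral_of_continuous (by fun_prop) continuous_id

theorem laplaceConv_comm (x y : ℝ → ℝ) (t : ℝ) : laplaceConv x y t = laplaceConv y x t := by
  have h := intervalIntegral.integral_comp_sub_left (fun s => x s * y (t - s)) t (a := 0) (b := t)
  simp only [sub_sub_cancel, sub_zero, sub_self] at h
  rw [laplaceConv, h, laplaceConv]
  simp_rw [mul_comm]

theorem laplaceConv_congr (ht : 0 ≤ t) (hx : EqOn x x' (Icc 0 t)) (hy : EqOn y y' (Icc 0 t)) :
    laplaceConv x y t = laplaceConv x' y' t := by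
  refine intervalIntegral.integral_congr fun s hs => ?_
  rw [uIcc_of_le ht] at hs
  simp only [hx ⟨sub_nonneg.2 hs.2, sub_le_self _ hs.1⟩, hy hs]

private theorem intervalIntegrable_laplaceConv_integrand (hx : Continuous x) (hy : Continuous y)
    (t : ℝ) : IntervalIntegrable (fun s => x (t - s) * y s) volume 0 t :=
  (by fun_prop : Continuous fun s => x (t - s) * y s).intervalIntegrable 0 t

theorem laplaceConv_add_left (hx : Continuous x) (hx' : Continuous x') (hy : Continuous y) :
    laplaceConv (x + x') y t = laplaceConv x y t + laplaceConv x' y t := by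
  simp only [laplaceConv, Pi.add_apply, add_mul]
  exact intervalIntegral.integral_add (intervalIntegrable_laplaceConv_integrand hx hy t)
    (intervalIntegrable_laplaceConv_integrand hx' hy t)

theorem laplaceConv_add_right (hx : Continuous x) (hy : Continuous y) (hy' : Continuous y') :
    laplaceConv x (y + y') t = laplaceConv x y t + laplaceConv x y' t := by
  simp only [laplaceConv, Pi.add_apply, mul_add]
  exact intervalIntegral.integral_add (intervalIntegrable_laplaceConv_integrand hx hy t)
    (intervalIntegrable_laplaceConv_integrand hx hy' t)

theorem laplaceConv_sub_left (hx : Continuous x) (hx' : Continuous x') (hy : Continuous y) :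
    laplaceConv (x - x') y t = laplaceConv x y t - laplaceConv x' y t := by
  simp only [laplaceConv, Pi.sub_apply, sub_mul]
  exact intervalIntegral.integral_sub (intervalIntegrable_laplaceConv_integrand hx hy t)
    (intervalIntegrable_laplaceConv_integrand hx' hy t)

theorem laplaceConv_sub_right (hx : Continuous x) (hy : Continuous y) (hy' : Continuous y') :
    laplaceConv x (y - y') t = laplaceConv x y t - laplaceConv x y' t := by
  simp only [laplaceConv, Pi.sub_apply, mul_sub]
  exact intervalIntegral.integral_sub (intervalIntegrable_laplaceConv_integrand hx hy t)
    (intervalIntegrable_laplaceConv_integrand hx hy' t)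

theorem laplaceConv_smul_left (c : ℝ) : laplaceConv (c • x) y t = c * laplaceConv x y t := by
  simp only [laplaceConv, Pi.smul_apply, smul_eq_mul, mul_assoc,
    intervalIntegral.integral_const_mul]

theorem laplaceConv_smul_right (c : ℝ) : laplaceConv x (c • y) t = c * laplaceConv x y t := by
  simp only [laplaceConv, Pi.smul_apply, smul_eq_mul, mul_left_comm _ c,
    intervalIntegral.integral_const_mul]

theorem laplaceConv_const_left (c : ℝ) :
    laplaceConv (fun _ => c) y t = c * ∫ s in 0..t, y s := by
  simp only [laplaceConv, intervalIntegral.integral_const_mul]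

theorem laplaceConv_one_right (x : ℝ → ℝ) (t : ℝ) :
    laplaceConv x (fun _ => 1) t = ∫ s in 0..t, x s := by
  rw [laplaceConv_comm, laplaceConv_const_left, one_mul]

theorem laplaceConv_assoc (hx : Continuous x) (hy : Continuous y) (hw : Continuous w)
    (ht : 0 ≤ t) :
    laplaceConv (laplaceConv x y) w t = laplaceConv x (laplaceConv y w) t := by
  have hswap := integral_integral_triangle_swap
    (F := fun σ s => x (t - σ) * y (σ - s) * w s) (by fun_prop) ht
  simp only [laplaceConv, ← intervalIntegral.integral_mul_const,
    ← intervalIntegral.integral_const_mul, ← mul_assoc]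
  rw [hswap]
  refine intervalIntegral.integral_congr fun s _ => ?_
  simpa [sub_sub_sub_cancel_right] using (intervalIntegral.integral_comp_sub_right
    (fun r => x (t - s - r) * y r * w s) s (a := s) (b := t)).symm

theorem integral_laplaceConv (hx : Continuous x) (hy : Continuous y) (ht : 0 ≤ t) :
    ∫ s in 0..t, laplaceConv x y s = laplaceConv (fun u => ∫ v in 0..u, x v) y t := by
  simp only [laplaceConv]
  rw [integral_integral_triangle_swap (F := fun s r => x (s - r) * y r) (by fun_prop) ht]
  refine intervalIntegral.integral_congr fun r _ => ?_
  simp [intervalIntegral.integral_mul_const, intervalIntegral.integral_comp_sub_right]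

theorem laplaceConv_primitive_comm (hx : Continuous x) (hy : Continuous y) (ht : 0 ≤ t) :
    laplaceConv (fun u => ∫ v in 0..u, x v) y t
      = laplaceConv (fun u => ∫ v in 0..u, y v) x t := by
  rw [← integral_laplaceConv hx hy ht, ← integral_laplaceConv hy hx ht]
  simp only [laplaceConv_comm x y]

end LaplaceConv

section Volterra

variable {k h x y u : ℝ → ℝ} {t : ℝ}

theorem volterra_sub (hk : Continuous k) (hx : Continuous x) (hy : Continuous y) :
    volterra k (x - y) t = volterra k x t - volterra k y t := by
  simp only [volterra, Pi.add_apply, Pi.sub_apply, laplaceConv_sub_right hk hx hy]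
  ring

theorem volterra_smul (c : ℝ) : volterra k (c • x) t = c * volterra k x t := by
  simp only [volterra, Pi.add_apply, Pi.smul_apply, smul_eq_mul, laplaceConv_smul_right]
  ring

theorem laplaceConv_volterra (hh : Continuous h) (hk : Continuous k) (hx : Continuous x)
    (ht : 0 ≤ t) : laplaceConv h (volterra k x) t = volterra k (laplaceConv h x) t := by
  rw [volterra, laplaceConv_add_right hh hx (continuous_laplaceConv hk hx), volterra,
    Pi.add_apply, ← laplaceConv_assoc hh hk hx ht, ← laplaceConv_assoc hk hh hx ht,
    funext (laplaceConv_comm h k)]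

theorem abs_laplaceConv_le (hk : Continuous k) (hu : Continuous u) {M : ℝ}
    (hM : ∀ s ∈ Icc 0 t, |k s| ≤ M) (ht : 0 ≤ t) :
    |laplaceConv k u t| ≤ M * ∫ s in 0..t, |u s| := by
  rw [← intervalIntegral.integral_const_mul]
  refine (intervalIntegral.abs_integral_le_integral_abs ht).trans
    (intervalIntegral.integral_mono_on ht ?_ ?_ fun s hs => ?_)
  · exact (by fun_prop : Continuous fun s => |k (t - s) * u s|).intervalIntegrable 0 t
  · exact (by fun_prop : Continuous fun s => M * |u s|).intervalIntegrable 0 t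
  · rw [abs_mul]
    exact mul_le_mul_of_nonneg_right (hM _ ⟨sub_nonneg.2 hs.2, sub_le_self _ hs.1⟩)
      (abs_nonneg _)

theorem eq_zero_of_volterra_eq_zero (hk : Continuous k) (hu : Continuous u) {T : ℝ}
    (hT : 0 ≤ T) (h : ∀ t ∈ Icc 0 T, volterra k u t = 0) : u T = 0 := by
  obtain ⟨M, hM⟩ := isCompact_Icc.exists_bound_of_continuousOn (s := Icc 0 T) hk.continuousOn
  let V : ℝ → ℝ := fun t => ∫ s in 0..t, |u s|
  have hV_cont : Continuous V :=
    intervalIntegral.continuous_primitive (fun a b => hu.abs.intervalIntegrable a b) 0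
  have hV_deriv : ∀ t, HasDerivAt V |u t| t := fun t =>
    intervalIntegral.integral_hasDerivAt_right (hu.abs.intervalIntegrable 0 t)
      hu.abs.stronglyMeasurable.stronglyMeasurableAtFilter hu.abs.continuousAt
  have hV_nonneg : ∀ t, 0 ≤ t → 0 ≤ V t := fun t ht =>
    intervalIntegral.integral_nonneg ht fun s _ => abs_nonneg _
  have hu_le : ∀ t ∈ Icc 0 T, |u t| ≤ M * V t := by
    intro t ht
    rw [← neg_eq_of_add_eq_zero_left (h t ht), abs_neg]
    exact abs_laplaceConv_le hk hu (fun s hs => hM s ⟨hs.1, hs.2.trans ht.2⟩) ht.1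
  have hV_zero : V T = 0 := by
    have := norm_le_gronwallBound_of_norm_deriv_right_le (f := V) (f' := fun t => |u t|)
      (δ := 0) (K := M) (ε := 0) hV_cont.continuousOn (fun t _ => (hV_deriv t).hasDerivWithinAt)
      (by simp [V]) (fun t ht => by
        simpa [abs_of_nonneg (hV_nonneg t ht.1)] using hu_le t ⟨ht.1, ht.2.le⟩) T ⟨hT, le_rfl⟩
    rw [gronwallBound_ε0_δ0] at this
    exact norm_le_zero_iff.1 this
  simpa [hV_zero] using hu_le T ⟨hT, le_rfl⟩

end Volterra

theorem integral_eq_sub_of_hasDerivWithinAt_Ici {φ φ' : ℝ → ℝ} {a b : ℝ}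
    (hφ : ∀ s ∈ Ici a, HasDerivWithinAt φ (φ' s) (Ici a) s) (hφ' : ContinuousOn φ' (Ici a))
    (hab : a ≤ b) : ∫ s in a..b, φ' s = φ b - φ a := by
  refine intervalIntegral.integral_eq_sub_of_hasDeriv_right_of_le hab
    (fun s hs => (hφ s hs.1).continuousWithinAt.mono Icc_subset_Ici_self)
    (fun s hs => ((hφ s hs.1.le).hasDerivAt (Ici_mem_nhds hs.1)).hasDerivWithinAt) ?_
  exact (hφ'.mono (by rw [uIcc_of_le hab]; exact Icc_subset_Ici_self)).intervalIntegrable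

theorem volterra_eq_add_integral {b b' x x' R : ℝ → ℝ} (hb : Continuous b)
    (hb' : Continuous b') (hbd : ∀ s ∈ Ici 0, HasDerivWithinAt b (b' s) (Ici 0) s)
    (hx : Continuous x) (hx' : Continuous x')
    (hxd : ∀ s ∈ Ici 0, HasDerivWithinAt x (x' s) (Ici 0) s)
    (heq : ∀ s ≥ 0, x' s + b 0 * x s + laplaceConv b' x s = R s) {t : ℝ} (ht : 0 ≤ t) :
    volterra b x t = x 0 + ∫ s in 0..t, R s := by
  have hR : ∫ s in 0..t, R s = (x t - x 0) + b 0 * (∫ s in 0..t, x s)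
      + laplaceConv (fun u => ∫ v in 0..u, b' v) x t := by
    rw [← intervalIntegral.integral_congr fun s hs => heq s (uIcc_of_le ht ▸ hs).1,
      intervalIntegral.integral_add (f := fun s => x' s + b 0 * x s)
        ((hx'.add (continuous_const.mul hx)).intervalIntegrable 0 t)
        ((continuous_laplaceConv hb' hx).intervalIntegrable 0 t),
      intervalIntegral.integral_add (g := fun s => b 0 * x s) (hx'.intervalIntegrable 0 t)
        ((continuous_const.mul hx).intervalIntegrable 0 t),
      intervalIntegral.integral_const_mul,
      integral_eq_sub_of_hasDerivWithinAt_Ici hxd hx'.continuousOn ht,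
      integral_laplaceConv hb' hx ht]
  have hb_primitive : laplaceConv (fun u => ∫ v in 0..u, b' v) x t
      = laplaceConv b x t - b 0 * ∫ s in 0..t, x s := by
    rw [laplaceConv_congr (x' := b - fun _ => b 0) ht
        (fun u hu => integral_eq_sub_of_hasDerivWithinAt_Ici hbd hb'.continuousOn hu.1)
        (eqOn_refl _ _),
      laplaceConv_sub_left hb continuous_const hx, laplaceConv_const_left]
  rw [hR, hb_primitive, volterra, Pi.add_apply]
  ring

theorem representation_of_volterra_eq {b A g z θ : ℝ → ℝ} {lam c ξ : ℝ} (hb : Continuous b)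
    (hA : Continuous A) (hg : Continuous g) (hz : Continuous z) (hθ : Continuous θ)
    (hlam : lam ≠ 0) (hzeq : ∀ t ≥ 0, volterra b z t + lam ^ 2 * laplaceConv A z t = 1)
    (hθeq : ∀ t ≥ 0, volterra b θ t + lam ^ 2 * laplaceConv A θ t
      = ξ + c * laplaceConv A (fun u => ∫ v in 0..u, g v) t) {t : ℝ} (ht : 0 ≤ t) :
    θ t = z t * ξ + c / lam ^ 2 * (∫ s in 0..t, g s)
      - c / lam ^ 2 * laplaceConv g (volterra b z) t := by
  set k := b + lam ^ 2 • A
  have hk : Continuous k := hb.add (hA.const_smul _)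
  have hvolterra_k : ∀ {x}, Continuous x → ∀ s,
      volterra k x s = volterra b x s + lam ^ 2 * laplaceConv A x s := by
    intro x hx s
    simp only [k, volterra, Pi.add_apply, laplaceConv_add_left hb (hA.const_smul _) hx,
      laplaceConv_smul_left]
    ring
  set P := laplaceConv A z
  have hP : Continuous P := continuous_laplaceConv hA hz
  have hPeq : ∀ s ≥ 0, volterra k P s = ∫ v in 0..s, A v := by
    intro s hs
    rw [← laplaceConv_volterra hA hk hz hs,
      laplaceConv_congr (y' := fun _ => 1) hs (eqOn_refl _ _)
        fun r hr => (hvolterra_k hz r).trans (hzeq r hr.1),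
      laplaceConv_one_right]
  set Q := laplaceConv g P
  have hQ : Continuous Q := continuous_laplaceConv hg hP
  have hQeq : ∀ s ≥ 0, volterra k Q s = laplaceConv A (fun u => ∫ v in 0..u, g v) s := by
    intro s hs
    rw [← laplaceConv_volterra hg hk hP hs,
      laplaceConv_congr hs (eqOn_refl _ _) fun r hr => hPeq r hr.1,
      laplaceConv_comm, laplaceConv_primitive_comm hA hg hs, laplaceConv_comm]
  have hdiff_zero : (θ - ξ • z - c • Q) t = 0 := by
    refine eq_zero_of_volterra_eq_zero hk (by fun_prop) ht fun s hs => ?_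
    rw [volterra_sub hk (hθ.sub (hz.const_smul _)) (hQ.const_smul _), volterra_sub hk hθ
      (hz.const_smul _), volterra_smul, volterra_smul, hvolterra_k hθ, hvolterra_k hz,
      hθeq s hs.1, hzeq s hs.1, hQeq s hs.1]
    ring
  have hg_volterra : laplaceConv g (volterra b z) t = (∫ s in 0..t, g s) - lam ^ 2 * Q t := by
    rw [laplaceConv_congr (y' := (fun _ => 1) - lam ^ 2 • P) ht (eqOn_refl _ _) fun s hs => by
        simp only [Pi.sub_apply, Pi.smul_apply, smul_eq_mul, P, ← hzeq s hs.1]; ring,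
      laplaceConv_sub_right hg continuous_const (hP.const_smul _), laplaceConv_one_right,
      laplaceConv_smul_right]
  simp only [Pi.sub_apply, Pi.smul_apply, smul_eq_mul] at hdiff_zero
  rw [hg_volterra]
  field_simp
  linear_combination lam ^ 2 * hdiff_zero

theorem representation_of_continuous {a β β' g f z z' θ θ' : ℝ → ℝ} {lam c ξ : ℝ}
    (ha : Continuous a) (hβ : Continuous β) (hβ' : Continuous β')
    (hβd : ∀ t ∈ Ici 0, HasDerivWithinAt β (β' t) (Ici 0) t) (hg : Continuous g)
    (hf : ∀ t ≥ 0, f t = ∫ s in 0..t, g s)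
    (hz : Continuous z) (hz' : Continuous z')
    (hzd : ∀ t ∈ Ici 0, HasDerivWithinAt z (z' t) (Ici 0) t) (hz0 : z 0 = 1)
    (hzeq : ∀ t ≥ 0, z' t + β 0 * z t + laplaceConv β' z t = -lam ^ 2 * laplaceConv a z t)
    (hθ : Continuous θ) (hθ' : Continuous θ')
    (hθd : ∀ t ∈ Ici 0, HasDerivWithinAt θ (θ' t) (Ici 0) t) (hθ0 : θ 0 = ξ)
    (hθeq : ∀ t ≥ 0, θ' t + β 0 * θ t + laplaceConv β' θ t
      = -lam ^ 2 * laplaceConv a θ t + c * laplaceConv a f t)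
    (hlam : lam ≠ 0) {t : ℝ} (ht : 0 ≤ t) :
    θ t = z t * ξ + c / lam ^ 2 * (∫ s in 0..t, g s)
      - c / lam ^ 2 * laplaceConv g (volterra β z) t := by
  set A := fun u => ∫ v in 0..u, a v
  have hA : Continuous A :=
    intervalIntegral.continuous_primitive (fun _ _ => ha.intervalIntegrable _ _) 0
  set F := fun u => ∫ v in 0..u, g v
  have hF : Continuous F :=
    intervalIntegral.continuous_primitive (fun _ _ => hg.intervalIntegrable _ _) 0
  refine representation_of_volterra_eq hβ hA hg hz hθ hlam (fun s hs => ?_) (fun s hs => ?_) ht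
  · rw [volterra_eq_add_integral hβ hβ' hβd hz hz' hzd hzeq hs,
      intervalIntegral.integral_const_mul, integral_laplaceConv ha hz hs, hz0]
    ring
  · have hθeq' : ∀ s ≥ 0, θ' s + β 0 * θ s + laplaceConv β' θ s
        = -lam ^ 2 * laplaceConv a θ s + c * laplaceConv a F s := fun s hs => by
      rw [hθeq s hs, laplaceConv_congr hs (eqOn_refl _ _) fun r hr => hf r hr.1]
    rw [volterra_eq_add_integral hβ hβ' hβd hθ hθ' hθd hθeq' hs,
      intervalIntegral.integral_add (f := fun s => -lam ^ 2 * laplaceConv a θ s)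
        (g := fun s => c * laplaceConv a F s)
        ((continuous_const.mul (continuous_laplaceConv ha hθ)).intervalIntegrable 0 s)
        ((continuous_const.mul (continuous_laplaceConv ha hF)).intervalIntegrable 0 s),
      intervalIntegral.integral_const_mul, intervalIntegral.integral_const_mul,
      integral_laplaceConv ha hθ hs, integral_laplaceConv ha hF hs, hθ0]
    ring

def extendIci (f : ℝ → ℝ) (t : ℝ) : ℝ := f (max t 0)

section ExtendIci

variable {f x y : ℝ → ℝ} {t : ℝ}

theorem extendIci_of_nonneg (ht : 0 ≤ t) : extendIci f t = f t :=
  congrArg f (max_eq_left ht)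

theorem ContinuousOn.continuous_extendIci (hf : ContinuousOn f (Ici 0)) :
    Continuous (extendIci f) :=
  hf.comp_continuous (continuous_id.max continuous_const) fun t => le_max_right t 0

theorem hasDerivWithinAt_extendIci {f' : ℝ → ℝ}
    (hf : ∀ t ∈ Ici 0, HasDerivWithinAt f (f' t) (Ici 0) t) :
    ∀ t ∈ Ici 0, HasDerivWithinAt (extendIci f) (extendIci f' t) (Ici 0) t := fun t ht => by
  rw [extendIci_of_nonneg ht]
  exact (hf t ht).congr (fun s hs => extendIci_of_nonneg hs) (extendIci_of_nonneg ht)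

theorem continuous_extendIci_of_hasDerivWithinAt {f' : ℝ → ℝ}
    (hf : ∀ t ∈ Ici 0, HasDerivWithinAt f (f' t) (Ici 0) t) : Continuous (extendIci f) :=
  ContinuousOn.continuous_extendIci fun t ht => (hf t ht).continuousWithinAt

theorem integral_extendIci (ht : 0 ≤ t) : ∫ s in 0..t, extendIci f s = ∫ s in 0..t, f s :=
  intervalIntegral.integral_congr fun _ hs => extendIci_of_nonneg (uIcc_of_le ht ▸ hs).1

theorem laplaceConv_extendIci_left (ht : 0 ≤ t) :
    laplaceConv (extendIci x) y t = laplaceConv x y t :=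
  laplaceConv_congr ht (fun _ hs => extendIci_of_nonneg hs.1) (eqOn_refl _ _)

theorem laplaceConv_extendIci_right (ht : 0 ≤ t) :
    laplaceConv x (extendIci y) t = laplaceConv x y t :=
  laplaceConv_congr ht (eqOn_refl _ _) fun _ hs => extendIci_of_nonneg hs.1

theorem volterra_extendIci (ht : 0 ≤ t) :
    volterra (extendIci x) (extendIci y) t = volterra x y t := by
  simp only [volterra, Pi.add_apply, extendIci_of_nonneg ht, laplaceConv_extendIci_left ht,
    laplaceConv_extendIci_right ht]

end ExtendIci

theorem stmt_2
    (a β β' : ℝ → ℝ) (lam c ξ : ℝ) (g z z' θ θ' : ℝ → ℝ)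
    (ha : ContinuousOn a (Set.Ici 0))
    (hβcont : ContinuousOn β (Set.Ici 0))
    (hβderiv : ∀ t ∈ Set.Ici (0:ℝ), HasDerivWithinAt β (β' t) (Set.Ici 0) t)
    (hβ'cont : ContinuousOn β' (Set.Ici 0))
    (hlam : 0 < lam)
    (hg : ContinuousOn g (Set.Ici 0))
    (f : ℝ → ℝ) (hf : ∀ t, f t = ∫ s in (0:ℝ)..t, g s)
    (hzderiv : ∀ t ∈ Set.Ici (0:ℝ), HasDerivWithinAt z (z' t) (Set.Ici 0) t)
    (hz'cont : ContinuousOn z' (Set.Ici 0))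
    (hz0 : z 0 = 1)
    (hzeq : ∀ t ≥ (0:ℝ),
      z' t + β 0 * z t + (∫ s in (0:ℝ)..t, β' (t - s) * z s)
        = -lam ^ 2 * ∫ s in (0:ℝ)..t, a (t - s) * z s)
    (hθderiv : ∀ t ∈ Set.Ici (0:ℝ), HasDerivWithinAt θ (θ' t) (Set.Ici 0) t)
    (hθ'cont : ContinuousOn θ' (Set.Ici 0))
    (hθ0 : θ 0 = ξ)
    (hθeq : ∀ t ≥ (0:ℝ),
      θ' t + β 0 * θ t + (∫ s in (0:ℝ)..t, β' (t - s) * θ s)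
        = -lam ^ 2 * (∫ s in (0:ℝ)..t, a (t - s) * θ s)
          + c * ∫ s in (0:ℝ)..t, a (t - s) * f s) :
    ∀ t ≥ (0:ℝ),
      θ t = z t * ξ + (c / lam ^ 2) * (∫ s in (0:ℝ)..t, g s)
        - (c / lam ^ 2) *
            ∫ s in (0:ℝ)..t, g (t - s) * (z s + ∫ r in (0:ℝ)..s, β (s - r) * z r) := by
  intro t ht
  have key := representation_of_continuous ha.continuous_extendIci hβcont.continuous_extendIci
    hβ'cont.continuous_extendIci (hasDerivWithinAt_extendIci hβderiv) hg.continuous_extendIci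
    (fun t ht => (hf t).trans (integral_extendIci ht).symm)
    (continuous_extendIci_of_hasDerivWithinAt hzderiv) hz'cont.continuous_extendIci
    (hasDerivWithinAt_extendIci hzderiv) ((extendIci_of_nonneg le_rfl).trans hz0)
    (fun s hs => by
      simp only [extendIci_of_nonneg hs, extendIci_of_nonneg (le_refl (0 : ℝ)),
        laplaceConv_extendIci_left hs, laplaceConv_extendIci_right hs]
      exact hzeq s hs)
    (continuous_extendIci_of_hasDerivWithinAt hθderiv) hθ'cont.continuous_extendIci
    (hasDerivWithinAt_extendIci hθderiv) ((extendIci_of_nonneg le_rfl).trans hθ0)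
    (fun s hs => by
      simp only [extendIci_of_nonneg hs, extendIci_of_nonneg (le_refl (0 : ℝ)),
        laplaceConv_extendIci_left hs, laplaceConv_extendIci_right hs]
      exact hθeq s hs)
    hlam.ne' ht
  rwa [extendIci_of_nonneg ht, extendIci_of_nonneg ht, integral_extendIci ht,
    laplaceConv_extendIci_left ht, laplaceConv_congr ht (eqOn_refl _ _)
      fun s hs => volterra_extendIci hs.1] at key
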